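/- arXiv:2006.06374 — 7 statements merged into one kernel-verified Lean document; each statement's English description precedes it below -/
import Mathlib

section
/- The composition Γ = T_P* T_P is a diagonal N×N matrix with entries Γ_{i,i} = min(i, P+1, N+1-i) for i = 1,...,N; in particular Γ is positive definite. -/
open scoped BigOperators

/-- The Toeplitzification operator: `[T_P(x)]_{i,j} = x_{-M+P+i-j}` (0-based indexing). -/
noncomputable def Toep (M P : ℕ) (x : Fin (2*M+1) → ℂ) :
    Matrix (Fin (2*M+1-P)) (Fin (P+1)) ℂ :=
  fun i j => x ⟨P + i.val - j.val, by have hi := i.isLt; have hj := j.isLt; omega⟩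

/-- The adjoint of the Toeplitzification operator (diagonal summation). -/
noncomputable def ToepStar (M P : ℕ) (H : Matrix (Fin (2*M+1-P)) (Fin (P+1)) ℂ) :
    Fin (2*M+1) → ℂ :=
  fun m => ∑ i : Fin (2*M+1-P), ∑ j : Fin (P+1),
    if P + i.val = m.val + j.val then H i j else 0

lemma count_eq (M P : ℕ) (hP : P ≤ M) (m : Fin (2*M+1)) :
    ∑ i : Fin (2*M+1-P), ∑ j : Fin (P+1),
      (if P + i.val = m.val + j.val then (1:ℕ) else 0)
    = min (m.val+1) (min (P+1) (2*M+1 - m.val)) := by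
  have hm := m.isLt
  rw [Finset.sum_comm]
  have h1 : ∀ j : Fin (P+1),
      ∑ i : Fin (2*M+1-P), (if P + i.val = m.val + j.val then (1:ℕ) else 0)
      = if P ≤ m.val + j.val ∧ m.val + j.val < 2*M+1 then 1 else 0 := by
    intro j
    rw [Fin.sum_univ_eq_sum_range (fun i => if P + i = m.val + j.val then (1:ℕ) else 0)]
    by_cases h : P ≤ m.val + j.val
    · have heq : ∀ i, (P + i = m.val + j.val) ↔ i = m.val + j.val - P := by
        intro i; omega
      simp only [heq]
      rw [Finset.sum_ite_eq' (Finset.range (2*M+1-P)) (m.val+j.val-P) (fun _ => (1:ℕ))]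
      simp only [Finset.mem_range]
      split_ifs <;> omega
    · have heq : ∀ i, ¬ (P + i = m.val + j.val) := by intro i; omega
      simp [heq, h]
  rw [Finset.sum_congr rfl (fun j _ => h1 j)]
  rw [Fin.sum_univ_eq_sum_range
    (fun j => if P ≤ m.val + j ∧ m.val + j < 2*M+1 then (1:ℕ) else 0)]
  rw [← Finset.card_filter]
  have hfil : (Finset.range (P+1)).filter
      (fun j => P ≤ m.val + j ∧ m.val + j < 2*M+1)
      = Finset.Ico (P - m.val) (min (P+1) (2*M+1 - m.val)) := by
    ext k
    simp only [Finset.mem_filter, Finset.mem_range, Finset.mem_Ico, lt_min_iff]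
    omega
  rw [hfil, Nat.card_Ico]
  omega

/-- `Γ = T_P^* T_P` is the diagonal matrix with entries
`Γ_{mm} = min(m+1, P+1, N-m)` (0-based; i.e. `min(i, P+1, N+1-i)` with 1-based `i`),
and `Γ` is positive definite. -/
theorem toepStar_toep_diagonal (M P : ℕ) (hP : P ≤ M) :
    (∀ (x : Fin (2*M+1) → ℂ) (m : Fin (2*M+1)),
        ToepStar M P (Toep M P x) m
          = ((min (m.val + 1) (min (P+1) (2*M+1 - m.val)) : ℕ) : ℂ) * x m) ∧
    (∀ x : Fin (2*M+1) → ℂ, x ≠ 0 →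
        0 < (∑ m : Fin (2*M+1),
              starRingEnd ℂ (x m) * ToepStar M P (Toep M P x) m).re) := by
  have part1 : ∀ (x : Fin (2*M+1) → ℂ) (m : Fin (2*M+1)),
      ToepStar M P (Toep M P x) m
        = ((min (m.val + 1) (min (P+1) (2*M+1 - m.val)) : ℕ) : ℂ) * x m := by
    intro x m
    have step : ∀ (i : Fin (2*M+1-P)) (j : Fin (P+1)),
        (if P + i.val = m.val + j.val then Toep M P x i j else 0)
        = (((if P + i.val = m.val + j.val then (1:ℕ) else 0) : ℕ) : ℂ) * x m := by
      intro i j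
      by_cases h : P + i.val = m.val + j.val
      · rw [if_pos h, if_pos h]
        have hT : Toep M P x i j = x m := by
          show x ⟨P + i.val - j.val, _⟩ = x m
          congr 1
          exact Fin.ext (by simp; omega)
        rw [hT]; push_cast; ring
      · simp [h]
    calc ToepStar M P (Toep M P x) m
        = ∑ i : Fin (2*M+1-P), ∑ j : Fin (P+1),
            (((if P + i.val = m.val + j.val then (1:ℕ) else 0) : ℕ) : ℂ) * x m := by
          unfold ToepStar
          exact Finset.sum_congr rfl fun i _ => Finset.sum_congr rfl fun j _ => step i j
      _ = ((∑ i : Fin (2*M+1-P), ∑ j : Fin (P+1),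
            (if P + i.val = m.val + j.val then (1:ℕ) else 0) : ℕ) : ℂ) * x m := by
          push_cast
          rw [Finset.sum_mul]
          exact Finset.sum_congr rfl fun i _ => (Finset.sum_mul _ _ _).symm
      _ = _ := by rw [count_eq M P hP m]
  refine ⟨part1, ?_⟩
  intro x hx
  have hterm : ∀ m : Fin (2*M+1),
      (starRingEnd ℂ (x m) * ToepStar M P (Toep M P x) m).re
      = ((min (m.val + 1) (min (P+1) (2*M+1 - m.val)) : ℕ) : ℝ) * Complex.normSq (x m) := by
    intro m
    rw [part1 x m]
    have : starRingEnd ℂ (x m)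
        * (((min (m.val + 1) (min (P+1) (2*M+1 - m.val)) : ℕ) : ℂ) * x m)
        = (((min (m.val + 1) (min (P+1) (2*M+1 - m.val)) : ℕ) : ℂ)
            * ((Complex.normSq (x m) : ℝ) : ℂ)) := by
      rw [← Complex.mul_conj (x m)]; ring
    rw [this]
    push_cast
    simp [Complex.mul_re]
  rw [Complex.re_sum]
  rw [Finset.sum_congr rfl (fun m _ => hterm m)]
  obtain ⟨m, hm⟩ := Function.ne_iff.mp hx
  apply Finset.sum_pos'
  · intro i _; exact mul_nonneg (Nat.cast_nonneg _) (Complex.normSq_nonneg _)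
  · refine ⟨m, Finset.mem_univ m, ?_⟩
    apply mul_pos
    · have := m.isLt
      have h1 : 0 < min (m.val + 1) (min (P+1) (2*M+1 - m.val)) := by omega
      exact_mod_cast h1
    · exact Complex.normSq_pos.mpr hm
end

section
/- (Eckart–Young for the Frobenius norm) For any matrix X ∈ C^{m×n} with singular value decomposition X = U Λ V^H (singular values sorted in decreasing order), the matrix U Λ_K V^H, where Λ_K retains only the K largest singular values and zeroes out the rest, is a minimizer of ||X - H||_F over all matrices H with rank at most K. -/
/-!
Multiplying by unitaries preserves the Frobenius norm, so it suffices to compare `S - SK` with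
`S - B` for `B = Uᴴ H V`, which still has rank at most `K`. The kernel of `B` has an orthonormal
basis `v₁, …, v_d` with `d ≥ n - K`. By Bessel's inequality, applied row by row,
`‖S - B‖² ≥ ∑ₗ ‖(S - B) vₗ‖² = ∑ₗ ‖S vₗ‖² = ∑ⱼ σⱼ² cⱼ` with `cⱼ = ∑ₗ |vₗ j|²`
(reading `σⱼ` as `0` for `j ≥ m`, where column `j` of `S` vanishes).
Bessel again gives `0 ≤ cⱼ ≤ 1`, and `∑ⱼ cⱼ = d`. For a decreasing sequence, such a weighted
sum is at least the sum of the `n - K` smallest terms, `∑_{j ≥ K} σⱼ² = ‖S - SK‖²`.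
-/

open Matrix Finset

section Frobenius

variable {𝕜 : Type*} [RCLike 𝕜] {m n : Type*} [Fintype m] [Fintype n]

lemma Matrix.trace_conjTranspose_mul_self_eq_sum_norm_sq (A : Matrix m n 𝕜) :
    (Aᴴ * A).trace = ((∑ i, ∑ j, ‖A i j‖ ^ 2 : ℝ) : 𝕜) := by
  rw [trace, Finset.sum_comm]
  push_cast
  refine Finset.sum_congr rfl fun j _ => Finset.sum_congr rfl fun i _ => ?_
  simp [RCLike.conj_mul]

lemma Matrix.sum_norm_sq_unitary_mul_mul_conjTranspose [DecidableEq m] [DecidableEq n]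
    {U : Matrix m m 𝕜} {V : Matrix n n 𝕜} (hU : U ∈ unitaryGroup m 𝕜)
    (hV : V ∈ unitaryGroup n 𝕜) (A : Matrix m n 𝕜) :
    ∑ i, ∑ j, ‖(U * A * Vᴴ) i j‖ ^ 2 = ∑ i, ∑ j, ‖A i j‖ ^ 2 := by
  have hU' : Uᴴ * U = 1 := mem_unitaryGroup_iff'.mp hU
  have hV' : Vᴴ * V = 1 := mem_unitaryGroup_iff'.mp hV
  have htrace : ((U * A * Vᴴ)ᴴ * (U * A * Vᴴ)).trace = (Aᴴ * A).trace := by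
    calc ((U * A * Vᴴ)ᴴ * (U * A * Vᴴ)).trace = (V * (Aᴴ * (Uᴴ * U) * A) * Vᴴ).trace := by
          simp only [conjTranspose_mul, conjTranspose_conjTranspose, Matrix.mul_assoc]
      _ = (Aᴴ * A).trace := by
          rw [trace_mul_comm, ← Matrix.mul_assoc, hV', hU', Matrix.one_mul, Matrix.mul_one]
  rw [trace_conjTranspose_mul_self_eq_sum_norm_sq,
    trace_conjTranspose_mul_self_eq_sum_norm_sq] at htrace
  exact_mod_cast htrace

end Frobenius

section Orthonormal

variable {𝕜 : Type*} [RCLike 𝕜] {ι m n : Type*} [Fintype ι] [Fintype m] [Fintype n]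
  {v : ι → EuclideanSpace 𝕜 n}

lemma Orthonormal.sum_sum_norm_apply_sq (hv : Orthonormal 𝕜 v) :
    ∑ j, ∑ l, ‖v l j‖ ^ 2 = Fintype.card ι := by
  rw [Finset.sum_comm]
  simp [← EuclideanSpace.norm_sq_eq, hv.1 _]

variable [DecidableEq n]

lemma Orthonormal.sum_norm_apply_sq_le_one (hv : Orthonormal 𝕜 v) (j : n) :
    ∑ l, ‖v l j‖ ^ 2 ≤ 1 := by
  simpa [EuclideanSpace.inner_single_right] using
    hv.sum_inner_products_le (s := Finset.univ) (EuclideanSpace.single j (1 : 𝕜))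

lemma Orthonormal.sum_norm_toEuclideanLin_sq_le (hv : Orthonormal 𝕜 v) (M : Matrix m n 𝕜) :
    ∑ l, ‖toEuclideanLin M (v l)‖ ^ 2 ≤ ∑ i, ∑ j, ‖M i j‖ ^ 2 := by
  simp_rw [EuclideanSpace.norm_sq_eq]
  rw [Finset.sum_comm]
  refine Finset.sum_le_sum fun i _ => ?_
  let row : EuclideanSpace 𝕜 n := WithLp.toLp 2 (star fun j => M i j)
  have hrow : ∀ l, (toEuclideanLin M (v l)) i = inner 𝕜 row (v l) := fun l => by
    simp [row, toLpLin_apply, mulVec, dotProduct, PiLp.inner_apply, mul_comm]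
  calc ∑ l, ‖(toEuclideanLin M (v l)) i‖ ^ 2 = ∑ l, ‖inner 𝕜 (v l) row‖ ^ 2 := by
        simp_rw [hrow, norm_inner_symm]
    _ ≤ ‖row‖ ^ 2 := hv.sum_inner_products_le row
    _ = ∑ j, ‖M i j‖ ^ 2 := by simp [row, EuclideanSpace.norm_sq_eq]

lemma Matrix.exists_orthonormal_toEuclideanLin_eq_zero {K : ℕ} (B : Matrix m n 𝕜)
    (hB : B.rank ≤ K) :
    ∃ (d : ℕ) (v : Fin d → EuclideanSpace 𝕜 n),
      Fintype.card n ≤ K + d ∧ Orthonormal 𝕜 v ∧ ∀ l, toEuclideanLin B (v l) = 0 := by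
  let ker := LinearMap.ker (toEuclideanLin B)
  have hrank : B.rank + Module.finrank 𝕜 ker = Fintype.card n := by
    rw [rank_eq_finrank_range_toLin B (PiLp.basisFun 2 𝕜 m) (PiLp.basisFun 2 𝕜 n),
      ← toLpLin_eq_toLin, LinearMap.finrank_range_add_finrank_ker, finrank_euclideanSpace]
  let b := stdOrthonormalBasis 𝕜 ker
  refine ⟨_, fun l => (b l : EuclideanSpace 𝕜 n), by omega,
    b.orthonormal.comp_linearIsometry ker.subtypeₗᵢ, fun l => (b l).2⟩

end Orthonormal

lemma Finset.sum_le_sum_mul_of_card_le_sum {ι : Type*} [Fintype ι] (s : Finset ι)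
    {a c : ι → ℝ} {t : ℝ} (ht : 0 ≤ t) (has : ∀ i ∈ s, a i ≤ t) (hat : ∀ i ∉ s, t ≤ a i)
    (hc0 : ∀ i, 0 ≤ c i) (hc1 : ∀ i, c i ≤ 1) (hcard : (s.card : ℝ) ≤ ∑ i, c i) :
    ∑ i ∈ s, a i ≤ ∑ i, a i * c i := by
  classical
  have hpoint : ∀ i,
      (if i ∈ s then a i else 0) + t * (c i - if i ∈ s then 1 else 0) ≤ a i * c i := by
    intro i
    by_cases hi : i ∈ s
    · simp only [hi, if_true]
      nlinarith [has i hi, hc1 i]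
    · simp only [hi, if_false]
      nlinarith [hat i hi, hc0 i]
  calc ∑ i ∈ s, a i ≤ ∑ i ∈ s, a i + t * (∑ i, c i - s.card) := by nlinarith
    _ = ∑ i, ((if i ∈ s then a i else 0) + t * (c i - if i ∈ s then 1 else 0)) := by
      rw [Finset.sum_add_distrib, ← Finset.mul_sum, Finset.sum_sub_distrib, Finset.sum_ite_mem,
        Finset.sum_boole, Finset.univ_inter, Finset.filter_univ_mem]
    _ ≤ ∑ i, a i * c i := Finset.sum_le_sum fun i _ => hpoint i

lemma Fin.sum_ite_val_eq {M : Type*} [AddCommMonoid M] {n : ℕ} (k : ℕ) (f : Fin n → M) :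
    ∑ j : Fin n, (if k = j then f j else 0) = if h : k < n then f ⟨k, h⟩ else 0 := by
  split_ifs with h
  · rw [Finset.sum_eq_single ⟨k, h⟩ (fun j _ hj => if_neg fun hk => hj (Fin.ext hk.symm))
      (by simp), if_pos rfl]
  · exact Finset.sum_eq_zero fun j _ => if_neg (by omega)

lemma Fin.sum_sum_ite_val_eq {M : Type*} [AddCommMonoid M] {m n : ℕ} (g : Fin n → M) :
    ∑ i : Fin m, ∑ j : Fin n, (if (i : ℕ) = j then g j else 0)
      = ∑ j : Fin n, if (j : ℕ) < m then g j else 0 := by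
  rw [Finset.sum_comm]
  simp_rw [eq_comm (a := ((_ : Fin m) : ℕ)), Fin.sum_ite_val_eq, dite_eq_ite]

section RectangularDiagonal

variable {m n : ℕ} {σ : ℕ → ℝ} {S : Matrix (Fin m) (Fin n) ℂ}

lemma norm_sq_toEuclideanLin_of_rectDiag
    (hS : ∀ i j, S i j = if (i : ℕ) = (j : ℕ) then ((σ (i : ℕ) : ℝ) : ℂ) else 0)
    (w : EuclideanSpace ℂ (Fin n)) :
    ‖toEuclideanLin S w‖ ^ 2 = ∑ j : Fin n, (if (j : ℕ) < m then σ j ^ 2 else 0) * ‖w j‖ ^ 2 := by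
  have hrow : ∀ i : Fin m, ‖toEuclideanLin S w i‖ ^ 2
      = ∑ j : Fin n, if (i : ℕ) = j then σ j ^ 2 * ‖w j‖ ^ 2 else 0 := by
    intro i
    simp only [toLpLin_apply, mulVec, dotProduct, hS, ite_mul, zero_mul, Fin.sum_ite_val_eq]
    split_ifs <;> simp [mul_pow]
  simp_rw [EuclideanSpace.norm_sq_eq, hrow, Fin.sum_sum_ite_val_eq, ite_mul, zero_mul]

lemma sum_norm_sq_sub_of_rectDiag {K : ℕ} {SK : Matrix (Fin m) (Fin n) ℂ}
    (hS : ∀ i j, S i j = if (i : ℕ) = (j : ℕ) then ((σ (i : ℕ) : ℝ) : ℂ) else 0)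
    (hSK : ∀ i j, SK i j
      = if (i : ℕ) = (j : ℕ) ∧ (i : ℕ) < K then ((σ (i : ℕ) : ℝ) : ℂ) else 0) :
    ∑ i, ∑ j, ‖(S - SK) i j‖ ^ 2
      = ∑ j ∈ Finset.univ.filter (fun j : Fin n => K ≤ j), if (j : ℕ) < m then σ j ^ 2 else 0 := by
  have hentry : ∀ i j, ‖(S - SK) i j‖ ^ 2
      = if (i : ℕ) = j then (if K ≤ (j : ℕ) then σ j ^ 2 else 0) else 0 := by
    intro i j
    rw [Matrix.sub_apply, hS, hSK]
    split_ifs <;> simp_all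
    omega
  simp_rw [hentry, Fin.sum_sum_ite_val_eq, Finset.sum_filter]
  exact Finset.sum_congr rfl fun j _ => by split_ifs <;> rfl

lemma sum_filter_le_sum_norm_sq_sub_of_rectDiag {K : ℕ} (hσ0 : ∀ i, 0 ≤ σ i)
    (hσmono : Antitone σ)
    (hS : ∀ i j, S i j = if (i : ℕ) = (j : ℕ) then ((σ (i : ℕ) : ℝ) : ℂ) else 0)
    (B : Matrix (Fin m) (Fin n) ℂ) (hB : B.rank ≤ K) :
    ∑ j ∈ Finset.univ.filter (fun j : Fin n => K ≤ j), (if (j : ℕ) < m then σ j ^ 2 else 0)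
      ≤ ∑ i, ∑ j, ‖(S - B) i j‖ ^ 2 := by
  obtain ⟨d, v, hd, hv, hBv⟩ := B.exists_orthonormal_toEuclideanLin_eq_zero hB
  let a : ℕ → ℝ := fun k => if k < m then σ k ^ 2 else 0
  have ha0 : ∀ k, 0 ≤ a k := fun k => by positivity
  have ha : Antitone a := by
    intro k k' hk
    by_cases hk' : k' < m
    · simp only [a, if_pos hk', if_pos (hk.trans_lt hk')]
      exact pow_le_pow_left₀ (hσ0 k') (hσmono hk) 2
    · simpa [a, hk'] using ha0 k
  have hcard : #{j : Fin n | K ≤ (j : ℕ)} + min n K = n := by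
    simpa [Fin.card_filter_val_lt] using
      Finset.card_filter_add_card_filter_not (s := Finset.univ) (fun j : Fin n => K ≤ (j : ℕ))
  calc ∑ j ∈ Finset.univ.filter (fun j : Fin n => K ≤ j), a j
      ≤ ∑ j : Fin n, a j * ∑ l, ‖v l j‖ ^ 2 := by
        refine Finset.sum_le_sum_mul_of_card_le_sum _ (ha0 K) (fun j hj => ha (by simpa using hj))
          (fun j hj => ha (by simpa using hj : (j : ℕ) < K).le) (fun j => by positivity)
          hv.sum_norm_apply_sq_le_one ?_
        rw [hv.sum_sum_norm_apply_sq, Fintype.card_fin]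
        rw [Fintype.card_fin] at hd
        exact_mod_cast (by omega : #{j : Fin n | K ≤ (j : ℕ)} ≤ d)
    _ = ∑ l, ‖toEuclideanLin S (v l)‖ ^ 2 := by
        simp_rw [norm_sq_toEuclideanLin_of_rectDiag hS, Finset.mul_sum]
        exact Finset.sum_comm
    _ = ∑ l, ‖toEuclideanLin (S - B) (v l)‖ ^ 2 := by simp [hBv]
    _ ≤ ∑ i, ∑ j, ‖(S - B) i j‖ ^ 2 := hv.sum_norm_toEuclideanLin_sq_le (S - B)

end RectangularDiagonal

/-- Eckart–Young, Frobenius norm: if `X = U Λ Vᴴ` is a singular value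
decomposition (with `U`, `V` unitary and `Λ` the rectangular diagonal matrix of the
singular values `σ_0 ≥ σ_1 ≥ … ≥ 0`), then `U Λ_K Vᴴ`, where `Λ_K` retains only the `K`
largest singular values, minimises `‖X - H‖_F` over matrices `H` of rank at most `K`. -/
theorem eckart_young (m n K : ℕ) (X : Matrix (Fin m) (Fin n) ℂ)
    (U : Matrix (Fin m) (Fin m) ℂ) (V : Matrix (Fin n) (Fin n) ℂ)
    (hU : U ∈ Matrix.unitaryGroup (Fin m) ℂ) (hV : V ∈ Matrix.unitaryGroup (Fin n) ℂ)
    (σ : ℕ → ℝ) (hσ0 : ∀ i, 0 ≤ σ i) (hσmono : Antitone σ)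
    (S SK : Matrix (Fin m) (Fin n) ℂ)
    (hS : ∀ i j, S i j = if (i : ℕ) = (j : ℕ) then ((σ (i : ℕ) : ℝ) : ℂ) else 0)
    (hSK : ∀ i j, SK i j
      = if (i : ℕ) = (j : ℕ) ∧ (i : ℕ) < K then ((σ (i : ℕ) : ℝ) : ℂ) else 0)
    (hX : X = U * S * Vᴴ)
    (H : Matrix (Fin m) (Fin n) ℂ) (hH : H.rank ≤ K) :
    Real.sqrt (∑ i, ∑ j, ‖(X - U * SK * Vᴴ) i j‖ ^ 2)
      ≤ Real.sqrt (∑ i, ∑ j, ‖(X - H) i j‖ ^ 2) := by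
  subst hX
  set B := Uᴴ * H * V
  have hUU : U * Uᴴ = 1 := mem_unitaryGroup_iff.mp hU
  have hVV : V * Vᴴ = 1 := mem_unitaryGroup_iff.mp hV
  have hHB : H = U * B * Vᴴ := by
    rw [Matrix.mul_assoc, Matrix.mul_assoc, Matrix.mul_assoc, hVV, Matrix.mul_one,
      ← Matrix.mul_assoc, hUU, Matrix.one_mul]
  have hB : B.rank ≤ K := ((rank_mul_le_left _ _).trans (rank_mul_le_right _ _)).trans hH
  apply Real.sqrt_le_sqrt
  calc ∑ i, ∑ j, ‖(U * S * Vᴴ - U * SK * Vᴴ) i j‖ ^ 2 = ∑ i, ∑ j, ‖(S - SK) i j‖ ^ 2 := by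
        rw [← Matrix.sub_mul, ← Matrix.mul_sub, sum_norm_sq_unitary_mul_mul_conjTranspose hU hV]
    _ = ∑ j ∈ Finset.univ.filter (fun j : Fin n => K ≤ j), (if (j : ℕ) < m then σ j ^ 2 else 0) :=
        sum_norm_sq_sub_of_rectDiag hS hSK
    _ ≤ ∑ i, ∑ j, ‖(S - B) i j‖ ^ 2 :=
        sum_filter_le_sum_norm_sq_sub_of_rectDiag hσ0 hσmono hS B hB
    _ = ∑ i, ∑ j, ‖(U * S * Vᴴ - H) i j‖ ^ 2 := by
        rw [hHB, ← Matrix.sub_mul, ← Matrix.mul_sub,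
          sum_norm_sq_unitary_mul_mul_conjTranspose hU hV]
end

section
/- For all x ∈ C^N, ||T_P(x)||_F^2 = ||Γ^{1/2} x||_2^2 = sum_{i=1}^N min(i, P+1, N+1-i) |x_i|^2; consequently ||T_P(x)||_F ≤ sqrt(P+1) ||x||_2, and the operator norm of T_P (from the Euclidean norm to the Frobenius norm) equals sqrt(P+1) whenever N ≥ 2(P+1)-1. -/
open scoped BigOperators

lemma toep_count (M P : ℕ) (hP : P ≤ M) (m : Fin (2*M+1)) :
    ∑ i : Fin (2*M+1-P), ∑ j : Fin (P+1),
      (if m = (⟨P + i.val - j.val, by have hi := i.isLt; have hj := j.isLt; omega⟩ :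
          Fin (2*M+1)) then (1:ℝ) else 0)
      = ((min (m.val + 1) (min (P+1) (2*M+1 - m.val)) : ℕ) : ℝ) := by
  rw [Finset.sum_comm]
  have step : ∀ j : Fin (P+1),
      ∑ i : Fin (2*M+1-P),
        (if m = (⟨P + i.val - j.val, by have hi := i.isLt; have hj := j.isLt; omega⟩ :
            Fin (2*M+1)) then (1:ℝ) else 0)
        = if P ≤ m.val + j.val ∧ m.val + j.val < 2*M+1 then (1:ℝ) else 0 := by
    intro j
    have hj := j.isLt
    by_cases h : P ≤ m.val + j.val ∧ m.val + j.val < 2*M+1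
    · rw [if_pos h]
      have hi0 : m.val + j.val - P < 2*M+1-P := by omega
      have hiff : ∀ i : Fin (2*M+1-P),
          (m = (⟨P + i.val - j.val, by have hi := i.isLt; omega⟩ : Fin (2*M+1)))
            ↔ i = (⟨m.val + j.val - P, hi0⟩ : Fin (2*M+1-P)) := by
        intro i
        have hi := i.isLt
        constructor
        · intro he
          have := congrArg Fin.val he
          simp at this
          apply Fin.ext
          simp
          omega
        · intro he
          subst he
          apply Fin.ext
          simp
          omega
      simp only [hiff]
      simp
    · rw [if_neg h]
      apply Finset.sum_eq_zero
      intro i _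
      have hi := i.isLt
      rw [if_neg]
      intro he
      have := congrArg Fin.val he
      simp at this
      omega
  simp only [step]
  rw [Fin.sum_univ_eq_sum_range (fun k => if P ≤ m.val + k ∧ m.val + k < 2*M+1 then (1:ℝ) else 0)]
  rw [Finset.sum_boole]
  have hfil : (Finset.range (P+1)).filter (fun k => P ≤ m.val + k ∧ m.val + k < 2*M+1)
      = Finset.Ico (P - m.val) (min (P+1) (2*M+1 - m.val)) := by
    ext k
    simp only [Finset.mem_filter, Finset.mem_range, Finset.mem_Ico]
    omega
  rw [hfil, Nat.card_Ico]
  congr 1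
  have hm := m.isLt
  omega

/-- `‖T_P(x)‖_F² = ‖Γ^{1/2}x‖² = ∑_m min(m+1, P+1, N-m)|x_m|²` (0-based),
hence `‖T_P(x)‖_F ≤ √(P+1)‖x‖₂`, and the operator norm of `T_P` (Euclidean → Frobenius)
equals `√(P+1)` whenever `N ≥ 2(P+1)-1` (the bound is attained by some nonzero `x`). -/
theorem toep_frobenius_norm (M P : ℕ) (hP : P ≤ M) :
    (∀ x : Fin (2*M+1) → ℂ,
        ∑ i, ∑ j, ‖Toep M P x i j‖ ^ 2
          = ∑ m : Fin (2*M+1),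
              ((min (m.val + 1) (min (P+1) (2*M+1 - m.val)) : ℕ) : ℝ) * ‖x m‖ ^ 2) ∧
    (∀ x : Fin (2*M+1) → ℂ,
        Real.sqrt (∑ i, ∑ j, ‖Toep M P x i j‖ ^ 2)
          ≤ Real.sqrt (P+1) * Real.sqrt (∑ m, ‖x m‖ ^ 2)) ∧
    (2*(P+1) - 1 ≤ 2*M+1 →
        ∃ x : Fin (2*M+1) → ℂ, x ≠ 0 ∧
          Real.sqrt (∑ i, ∑ j, ‖Toep M P x i j‖ ^ 2)
            = Real.sqrt (P+1) * Real.sqrt (∑ m, ‖x m‖ ^ 2)) := by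
  have key : ∀ x : Fin (2*M+1) → ℂ,
      ∑ i, ∑ j, ‖Toep M P x i j‖ ^ 2
        = ∑ m : Fin (2*M+1),
            ((min (m.val + 1) (min (P+1) (2*M+1 - m.val)) : ℕ) : ℝ) * ‖x m‖ ^ 2 := by
    intro x
    have h1 : ∀ (i : Fin (2*M+1-P)) (j : Fin (P+1)),
        ‖Toep M P x i j‖ ^ 2
          = ∑ m : Fin (2*M+1),
              (if m = (⟨P + i.val - j.val, by have hi := i.isLt; have hj := j.isLt; omega⟩ :
                  Fin (2*M+1)) then (1:ℝ) else 0) * ‖x m‖ ^ 2 := by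
      intro i j
      simp only [ite_mul, one_mul, zero_mul, Finset.sum_ite_eq', Finset.mem_univ, if_true]
      rfl
    calc ∑ i, ∑ j, ‖Toep M P x i j‖ ^ 2
        = ∑ i : Fin (2*M+1-P), ∑ j : Fin (P+1), ∑ m : Fin (2*M+1),
            (if m = (⟨P + i.val - j.val, by have hi := i.isLt; have hj := j.isLt; omega⟩ :
                Fin (2*M+1)) then (1:ℝ) else 0) * ‖x m‖ ^ 2 := by
          exact Finset.sum_congr rfl fun i _ => Finset.sum_congr rfl fun j _ => h1 i j
      _ = ∑ i : Fin (2*M+1-P), ∑ m : Fin (2*M+1), ∑ j : Fin (P+1),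
            (if m = (⟨P + i.val - j.val, by have hi := i.isLt; have hj := j.isLt; omega⟩ :
                Fin (2*M+1)) then (1:ℝ) else 0) * ‖x m‖ ^ 2 :=
          Finset.sum_congr rfl fun i _ => Finset.sum_comm
      _ = ∑ m : Fin (2*M+1), ∑ i : Fin (2*M+1-P), ∑ j : Fin (P+1),
            (if m = (⟨P + i.val - j.val, by have hi := i.isLt; have hj := j.isLt; omega⟩ :
                Fin (2*M+1)) then (1:ℝ) else 0) * ‖x m‖ ^ 2 := Finset.sum_comm
      _ = ∑ m : Fin (2*M+1),
            ((min (m.val + 1) (min (P+1) (2*M+1 - m.val)) : ℕ) : ℝ) * ‖x m‖ ^ 2 := by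
          refine Finset.sum_congr rfl fun m _ => ?_
          rw [← toep_count M P hP m, Finset.sum_mul]
          exact Finset.sum_congr rfl fun i _ => (Finset.sum_mul _ _ _).symm
  refine ⟨key, ?_, ?_⟩
  · intro x
    rw [key x, ← Real.sqrt_mul (by positivity)]
    apply Real.sqrt_le_sqrt
    rw [Finset.mul_sum]
    apply Finset.sum_le_sum
    intro m _
    apply mul_le_mul_of_nonneg_right _ (by positivity)
    have : min (m.val + 1) (min (P+1) (2*M+1 - m.val)) ≤ P + 1 := by omega
    calc ((min (m.val + 1) (min (P+1) (2*M+1 - m.val)) : ℕ) : ℝ)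
        ≤ ((P+1 : ℕ) : ℝ) := by exact_mod_cast this
      _ = (P : ℝ) + 1 := by push_cast; ring
  · intro _
    have hPlt : P < 2*M+1 := by omega
    set x : Fin (2*M+1) → ℂ := fun m => if m = (⟨P, hPlt⟩ : Fin (2*M+1)) then 1 else 0 with hx
    refine ⟨x, ?_, ?_⟩
    · intro h0
      have := congrFun h0 ⟨P, hPlt⟩
      simp [hx] at this
    · rw [key x]
      have hnorm : ∀ m : Fin (2*M+1), ‖x m‖ ^ 2
          = if m = (⟨P, hPlt⟩ : Fin (2*M+1)) then (1:ℝ) else 0 := by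
        intro m
        by_cases h : m = (⟨P, hPlt⟩ : Fin (2*M+1)) <;> simp [hx, h]
      have hs1 : ∑ m, ‖x m‖ ^ 2 = 1 := by
        simp only [hnorm]
        simp
      have hs2 : ∑ m : Fin (2*M+1),
          ((min (m.val + 1) (min (P+1) (2*M+1 - m.val)) : ℕ) : ℝ) * ‖x m‖ ^ 2
          = (P:ℝ) + 1 := by
        simp only [hnorm, mul_ite, mul_one, mul_zero]
        rw [Finset.sum_ite_eq' Finset.univ (⟨P, hPlt⟩ : Fin (2*M+1))]
        simp only [Finset.mem_univ, if_true]
        have : min (P + 1) (min (P+1) (2*M+1 - P)) = P + 1 := by omega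
        rw [this]
        push_cast; ring
      rw [hs1, hs2, Real.sqrt_one, mul_one]
end

section
/- For every Toeplitz matrix X ∈ T_P ⊂ C^{(N-P)×(P+1)}, the pseudoinverse satisfies ||T_P†(X)||_2^2 = ||W ⊙ X||_F^2, where W = T_P(diag(Γ^{-1/2})) and ⊙ is the Hadamard product; in particular ||T_P†(X)||_2 ≤ ||X||_F. -/
open scoped BigOperators

/-- The pseudoinverse `T_P^† = Γ^{-1} T_P^*` (diagonal averaging). -/
noncomputable def ToepDag (M P : ℕ) (H : Matrix (Fin (2*M+1-P)) (Fin (P+1)) ℂ) :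
    Fin (2*M+1) → ℂ :=
  fun m => (((min (m.val + 1) (min (P+1) (2*M+1 - m.val)) : ℕ) : ℂ))⁻¹ * ToepStar M P H m

/-- The entries of the weight matrix `W = T_P(diag(Γ^{-1/2}))`:
`W_{ij} = γ(P+i-j)^{-1/2}` where `γ(m) = min(m+1, P+1, N-m)` (0-based). -/
noncomputable def wgt (M P : ℕ) (i : Fin (2*M+1-P)) (j : Fin (P+1)) : ℝ :=
  (Real.sqrt ((min (P + i.val - j.val + 1)
      (min (P+1) (2*M+1 - (P + i.val - j.val))) : ℕ)))⁻¹

/-- The multiplicity of the `m`-th diagonal. -/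
def gam (M P m : ℕ) : ℕ := min (m + 1) (min (P+1) (2*M+1 - m))

lemma gam_pos (M P m : ℕ) (hm : m < 2*M+1) : 0 < gam M P m := by
  unfold gam; omega

/-- Counting lemma: the number of entries on the `m`-th diagonal is `gam M P m`. -/
lemma sum_count {K : Type*} [AddCommMonoid K] (M P : ℕ) (hP : P ≤ M)
    (m : Fin (2*M+1)) (c : K) :
    ∑ i : Fin (2*M+1-P), ∑ j : Fin (P+1),
      (if P + i.val = m.val + j.val then c else 0) = gam M P m.val • c := by
  rw [Finset.sum_comm]
  have hin : ∀ j : Fin (P+1),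
      ∑ i : Fin (2*M+1-P), (if P + i.val = m.val + j.val then c else 0)
        = if P ≤ m.val + j.val ∧ m.val + j.val < 2*M+1 then c else 0 := by
    intro j
    rw [Fin.sum_univ_eq_sum_range (fun i => if P + i = m.val + j.val then c else 0)]
    by_cases h : P ≤ m.val + j.val ∧ m.val + j.val < 2*M+1
    · rw [if_pos h]
      rw [Finset.sum_eq_single_of_mem (m.val + j.val - P)
        (Finset.mem_range.mpr (by omega))]
      · rw [if_pos (by omega)]
      · intro b _ hb
        rw [if_neg (by omega)]
    · rw [if_neg h]
      apply Finset.sum_eq_zero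
      intro i hi
      rw [Finset.mem_range] at hi
      rw [if_neg (by omega)]
  simp only [hin]
  rw [Fin.sum_univ_eq_sum_range
    (fun j => if P ≤ m.val + j ∧ m.val + j < 2*M+1 then c else 0)]
  rw [← Finset.sum_filter]
  have hfil : (Finset.range (P+1)).filter
      (fun j => P ≤ m.val + j ∧ m.val + j < 2*M+1)
      = Finset.Ico (P - m.val) (min (P+1) (2*M+1 - m.val)) := by
    ext j
    simp only [Finset.mem_filter, Finset.mem_range, Finset.mem_Ico]
    omega
  rw [hfil, Finset.sum_const, Nat.card_Ico]
  congr 1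
  have := m.isLt
  unfold gam
  omega

lemma sum_single {K : Type*} [AddCommMonoid K] {n : ℕ} (g : Fin n → K)
    (t : ℕ) (ht : t < n) :
    ∑ m : Fin n, (if m.val = t then g m else 0) = g ⟨t, ht⟩ := by
  rw [Finset.sum_eq_single_of_mem (⟨t, ht⟩ : Fin n) (Finset.mem_univ _)]
  · rw [if_pos rfl]
  · intro b _ hb
    rw [if_neg (fun h => hb (Fin.ext h))]

/-- for every Toeplitz matrix `X`, `‖T_P^†(X)‖₂² = ‖W ⊙ X‖_F²` with
`W = T_P(diag(Γ^{-1/2}))`; in particular `‖T_P^†(X)‖₂ ≤ ‖X‖_F`. -/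
theorem toepDag_norm (M P : ℕ) (hP : P ≤ M)
    (X : Matrix (Fin (2*M+1-P)) (Fin (P+1)) ℂ) (hX : ∃ x, X = Toep M P x) :
    (∑ m, ‖ToepDag M P X m‖ ^ 2 = ∑ i, ∑ j, (wgt M P i j * ‖X i j‖) ^ 2) ∧
    Real.sqrt (∑ m, ‖ToepDag M P X m‖ ^ 2) ≤ Real.sqrt (∑ i, ∑ j, ‖X i j‖ ^ 2) := by
  obtain ⟨x, rfl⟩ := hX
  -- the pseudoinverse recovers x
  have hkey : ∀ m : Fin (2*M+1), ToepDag M P (Toep M P x) m = x m := by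
    intro m
    have hγ : ((gam M P m.val : ℕ) : ℂ) ≠ 0 :=
      Nat.cast_ne_zero.mpr (gam_pos M P m.val m.isLt).ne'
    unfold ToepDag ToepStar Toep
    have h1 : ∑ i : Fin (2*M+1-P), ∑ j : Fin (P+1),
        (if P + i.val = m.val + j.val then
          x ⟨P + i.val - j.val, by have hi := i.isLt; have hj := j.isLt; omega⟩ else 0)
        = ∑ i : Fin (2*M+1-P), ∑ j : Fin (P+1),
          (if P + i.val = m.val + j.val then x m else 0) := by
      refine Finset.sum_congr rfl fun i _ => Finset.sum_congr rfl fun j _ => ?_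
      split_ifs with h
      · congr 1
        have hj := j.isLt
        exact Fin.ext (show P + i.val - j.val = m.val by omega)
      · rfl
    rw [h1, sum_count M P hP m (x m), nsmul_eq_mul]
    show ((gam M P m.val : ℕ) : ℂ)⁻¹ * _ = _
    rw [← mul_assoc, inv_mul_cancel₀ hγ, one_mul]
  have hLHS : ∑ m, ‖ToepDag M P (Toep M P x) m‖ ^ 2 = ∑ m, ‖x m‖ ^ 2 := by
    simp only [hkey]
  -- the weighted Frobenius norm
  set f : Fin (2*M+1) → ℝ := fun m => ((gam M P m.val : ℕ) : ℝ)⁻¹ * ‖x m‖ ^ 2 with hf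
  have hγR : ∀ m : Fin (2*M+1), ((gam M P m.val : ℕ) : ℝ) ≠ 0 := by
    intro m
    exact Nat.cast_ne_zero.mpr (gam_pos M P m.val m.isLt).ne'
  have hterm : ∀ (i : Fin (2*M+1-P)) (j : Fin (P+1)),
      (wgt M P i j * ‖Toep M P x i j‖) ^ 2
        = ∑ m : Fin (2*M+1), (if P + i.val = m.val + j.val then f m else 0) := by
    intro i j
    have hi := i.isLt; have hj := j.isLt
    have hlt : P + i.val - j.val < 2*M+1 := by omega
    have h2 : ∑ m : Fin (2*M+1), (if P + i.val = m.val + j.val then f m else 0)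
        = ∑ m : Fin (2*M+1), (if m.val = P + i.val - j.val then f m else 0) := by
      refine Finset.sum_congr rfl fun m _ => ?_
      congr 1
      simp only [eq_iff_iff]
      omega
    rw [h2, sum_single f _ hlt]
    unfold wgt Toep
    rw [mul_pow, hf]
    have hg : wgt M P i j = (Real.sqrt ((gam M P (P + i.val - j.val) : ℕ) : ℝ))⁻¹ := rfl
    simp only [gam]
    rw [inv_pow, Real.sq_sqrt (by positivity)]
  have hRHS : ∑ i, ∑ j, (wgt M P i j * ‖Toep M P x i j‖) ^ 2 = ∑ m, ‖x m‖ ^ 2 := by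
    calc ∑ i, ∑ j, (wgt M P i j * ‖Toep M P x i j‖) ^ 2
        = ∑ i : Fin (2*M+1-P), ∑ j : Fin (P+1), ∑ m : Fin (2*M+1),
            (if P + i.val = m.val + j.val then f m else 0) := by
          exact Finset.sum_congr rfl fun i _ => Finset.sum_congr rfl fun j _ => hterm i j
      _ = ∑ m : Fin (2*M+1), ∑ i : Fin (2*M+1-P), ∑ j : Fin (P+1),
            (if P + i.val = m.val + j.val then f m else 0) := by
          rw [show (∑ i : Fin (2*M+1-P), ∑ j : Fin (P+1), ∑ m : Fin (2*M+1),
              (if P + i.val = m.val + j.val then f m else 0))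
            = ∑ i : Fin (2*M+1-P), ∑ m : Fin (2*M+1), ∑ j : Fin (P+1),
              (if P + i.val = m.val + j.val then f m else 0) from
            Finset.sum_congr rfl fun i _ => Finset.sum_comm]
          exact Finset.sum_comm
      _ = ∑ m : Fin (2*M+1), gam M P m.val • f m := by
          exact Finset.sum_congr rfl fun m _ => sum_count M P hP m (f m)
      _ = ∑ m, ‖x m‖ ^ 2 := by
          refine Finset.sum_congr rfl fun m _ => ?_
          rw [nsmul_eq_mul, hf]
          push_cast
          rw [← mul_assoc, mul_inv_cancel₀ (hγR m), one_mul]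
  constructor
  · rw [hLHS, hRHS]
  · apply Real.sqrt_le_sqrt
    rw [hLHS, ← hRHS]
    refine Finset.sum_le_sum fun i _ => Finset.sum_le_sum fun j _ => ?_
    have hw0 : 0 ≤ wgt M P i j := by unfold wgt; positivity
    have hw1 : wgt M P i j ≤ 1 := by
      unfold wgt
      rw [inv_le_one_iff₀]
      right
      rw [show (1:ℝ) = Real.sqrt 1 from (Real.sqrt_one).symm]
      apply Real.sqrt_le_sqrt
      have hi := i.isLt; have hj := j.isLt
      have : 1 ≤ min (P + i.val - j.val + 1)
          (min (P+1) (2*M+1 - (P + i.val - j.val))) := by omega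
      exact_mod_cast this
    have hn : 0 ≤ ‖Toep M P x i j‖ := norm_nonneg _
    rw [mul_pow]
    have hw2 : wgt M P i j ^ 2 ≤ 1 := by nlinarith
    nlinarith [sq_nonneg ‖Toep M P x i j‖]
end

section
/- For all Z ∈ T_P (Toeplitz matrices) and all x ∈ C^N, ||T_P†(Z) - x||_2^2 = ||W ⊙ (Z - T_P(x))||_F^2, where W = T_P(diag(Γ^{-1/2})); i.e., the Euclidean distance between the generator of Z and x equals the W-weighted Frobenius distance between Z and T_P(x). -/
open scoped BigOperators

theorem fiber_card (M P : ℕ) (hP : P ≤ M) (m : Fin (2*M+1)) :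
    (Finset.univ.filter (fun p : Fin (2*M+1-P) × Fin (P+1) =>
      P + p.1.val = m.val + p.2.val)).card
      = min (m.val+1) (min (P+1) (2*M+1 - m.val)) := by
  have hm := m.isLt
  rw [Finset.card_filter, Fintype.sum_prod_type]
  have h1 : ∀ i : Fin (2*M+1-P),
      (∑ j : Fin (P+1), if P + i.val = m.val + j.val then 1 else 0)
      = if m.val ≤ P + i.val ∧ P + i.val ≤ m.val + P then 1 else 0 := by
    intro i
    by_cases h : m.val ≤ P + i.val ∧ P + i.val ≤ m.val + P
    · rw [if_pos h, Finset.sum_eq_single (⟨P + i.val - m.val, by omega⟩ : Fin (P+1))]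
      · simp only [Fin.val_mk]; rw [if_pos (by omega)]
      · intro j _ hj
        rw [if_neg]; intro hc; exact hj (Fin.ext (by omega : j.val = P + i.val - m.val))
      · exact fun h => absurd (Finset.mem_univ _) h
    · rw [if_neg h]
      refine Finset.sum_eq_zero fun j _ => ?_
      have hj := j.isLt
      rw [if_neg]; intro hc; exact h ⟨by omega, by omega⟩
  simp only [h1]
  rw [Fin.sum_univ_eq_sum_range (fun i => if m.val ≤ P + i ∧ P + i ≤ m.val + P then 1 else 0)]
  rw [← Finset.card_filter]
  have : (Finset.range (2*M+1-P)).filter (fun i => m.val ≤ P + i ∧ P + i ≤ m.val + P)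
      = Finset.Ico (m.val - P) (min (m.val+1) (2*M+1-P)) := by
    ext i; simp only [Finset.mem_filter, Finset.mem_range, Finset.mem_Ico]; omega
  rw [this, Nat.card_Ico]; omega


noncomputable def kmap (M P : ℕ) (p : Fin (2*M+1-P) × Fin (P+1)) : Fin (2*M+1) :=
  ⟨P + p.1.val - p.2.val, by have := p.1.isLt; have := p.2.isLt; omega⟩

/-- for every Toeplitz `Z` and every `x ∈ ℂ^N`,
`‖T_P^†(Z) - x‖₂² = ‖W ⊙ (Z - T_P(x))‖_F²` where `W = T_P(diag(Γ^{-1/2}))`. -/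
theorem toepDag_dist (M P : ℕ) (hP : P ≤ M)
    (Z : Matrix (Fin (2*M+1-P)) (Fin (P+1)) ℂ) (hZ : ∃ u, Z = Toep M P u)
    (x : Fin (2*M+1) → ℂ) :
    ∑ m, ‖ToepDag M P Z m - x m‖ ^ 2
      = ∑ i, ∑ j, (wgt M P i j * ‖(Z - Toep M P x) i j‖) ^ 2 := by
  obtain ⟨u, rfl⟩ := hZ
  set c : Fin (2*M+1) → ℕ := fun m => min (m.val+1) (min (P+1) (2*M+1 - m.val)) with hcdef
  have hc1 : ∀ m : Fin (2*M+1), 1 ≤ c m := fun m => by have := m.isLt; simp [hcdef]; omega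
  have hdag : ∀ m, ToepDag M P (Toep M P u) m = u m := by
    intro m
    have hstar : ToepStar M P (Toep M P u) m = (c m : ℂ) * u m := by
      unfold ToepStar
      have : ∀ i j, (if P + i.val = m.val + j.val then (Toep M P u) i j else 0)
          = (if P + i.val = m.val + j.val then u m else 0) := by
        intro i j
        split_ifs with h
        · unfold Toep
          congr 1
          exact Fin.ext (by have hj := j.isLt; simpa using by omega : (P + i.val - j.val) = m.val)
        · rfl
      simp only [this]
      rw [← Fintype.sum_prod_type']
      rw [← Finset.sum_filter]
      rw [Finset.sum_const, fiber_card M P hP m, nsmul_eq_mul]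
    unfold ToepDag
    rw [hstar, ← mul_assoc, inv_mul_cancel₀, one_mul]
    exact Nat.cast_ne_zero.mpr (by have := hc1 m; omega)
  have hterm : ∀ (i : Fin (2*M+1-P)) (j : Fin (P+1)),
      (wgt M P i j * ‖(Toep M P u - Toep M P x) i j‖) ^ 2
      = ((c (kmap M P (i, j)) : ℝ))⁻¹
          * ‖u (kmap M P (i, j)) - x (kmap M P (i, j))‖ ^ 2 := by
    intro i j
    have h1 : (Toep M P u - Toep M P x) i j = u (kmap M P (i, j)) - x (kmap M P (i, j)) := by
      simp [Toep, Matrix.sub_apply, kmap]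
    have h2 : wgt M P i j = (Real.sqrt (c (kmap M P (i, j))))⁻¹ := rfl
    rw [h1, h2, mul_pow, inv_pow, Real.sq_sqrt (by positivity)]
  simp only [hterm, hdag]
  rw [← Fintype.sum_prod_type']
  have key := Finset.sum_fiberwise_of_maps_to (s := Finset.univ) (t := Finset.univ)
    (g := kmap M P)
    (fun p _ => Finset.mem_univ (kmap M P p))
    (f := fun p => ((c (kmap M P p) : ℝ))⁻¹ * ‖u (kmap M P p) - x (kmap M P p)‖ ^ 2)
  simp only [Prod.mk.eta] at *
  rw [← key]
  refine Finset.sum_congr rfl fun m _ => ?_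
  have hfil : (Finset.univ.filter (fun p : Fin (2*M+1-P) × Fin (P+1) => kmap M P p = m))
      = (Finset.univ.filter (fun p : Fin (2*M+1-P) × Fin (P+1) =>
        P + p.1.val = m.val + p.2.val)) := by
    ext p
    simp only [Finset.mem_filter, Finset.mem_univ, true_and, Fin.ext_iff, kmap, Fin.val_mk]
    have := p.2.isLt; omega
  rw [hfil]
  have hval : ∀ p ∈ (Finset.univ.filter (fun p : Fin (2*M+1-P) × Fin (P+1) =>
      P + p.1.val = m.val + p.2.val)),
      ((c (kmap M P p) : ℝ))⁻¹ * ‖u (kmap M P p) - x (kmap M P p)‖ ^ 2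
      = ((c m : ℝ))⁻¹ * ‖u m - x m‖ ^ 2 := by
    intro p hp
    simp only [Finset.mem_filter] at hp
    have hpm : kmap M P p = m := by
      apply Fin.ext
      simp only [kmap, Fin.val_mk]
      have := p.2.isLt; omega
    rw [hpm]
  rw [Finset.sum_congr rfl hval, Finset.sum_const, fiber_card M P hP m, nsmul_eq_mul]
  have hcm : ((c m : ℝ)) ≠ 0 := Nat.cast_ne_zero.mpr (by have := hc1 m; omega)
  rw [show ((min (m.val+1) (min (P+1) (2*M+1-m.val)) : ℕ) : ℝ) = (c m : ℝ) from rfl,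
    ← mul_assoc, mul_inv_cancel₀ hcm, one_mul]
end

section
/- (Proposition 1) The proximal operator of H(x) = ι_{H_K}(T_P(x)) + ι_{B_ρ}(x) satisfies prox_{τH}(x) = T_P† Π^W_{T_P ∩ H_K ∩ B^W_ρ} T_P(x) for all x ∈ C^N, where Π^W denotes the (set-valued) projection with respect to the W-weighted Frobenius norm onto the intersection of the Toeplitz subspace, the rank-≤K set, and the weighted Frobenius ball B^W_ρ = {X : ||W ⊙ X||_F ≤ ρ}. -/
open scoped BigOperators ENNReal

private lemma count_lemma (M P : ℕ) (hP : P ≤ M) (m : ℕ) (hm : m < 2*M+1) :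
    ((Finset.univ : Finset (Fin (2*M+1-P) × Fin (P+1))).filter
      (fun p => P + p.1.val = m + p.2.val)).card
    = min (m+1) (min (P+1) (2*M+1-m)) := by
  have key : ((Finset.univ : Finset (Fin (2*M+1-P) × Fin (P+1))).filter
      (fun p => P + p.1.val = m + p.2.val)).card
      = (Finset.Icc (P - m) (min P (2*M - m))).card := by
    refine Finset.card_bij' (fun p _ => p.2.val)
      (fun b hb => (⟨m + b - P, by simp only [Finset.mem_Icc] at hb; omega⟩,
                    ⟨b, by simp only [Finset.mem_Icc] at hb; omega⟩)) ?_ ?_ ?_ ?_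
    · intro p hp
      simp only [Finset.mem_filter, Finset.mem_univ, true_and] at hp
      have h1 := p.1.isLt; have h2 := p.2.isLt
      simp only [Finset.mem_Icc]; omega
    · intro b hb
      simp only [Finset.mem_Icc] at hb
      simp only [Finset.mem_filter, Finset.mem_univ, true_and]; omega
    · intro p hp
      simp only [Finset.mem_filter, Finset.mem_univ, true_and] at hp
      have h2 := p.2.isLt
      refine Prod.ext (Fin.ext ?_) (Fin.ext ?_) <;> simp <;> omega
    · intro b hb; rfl
  rw [key, Nat.card_Icc]; omega

private lemma sum_diag (M P : ℕ) (hP : P ≤ M) {β : Type*} [AddCommMonoid β]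
    (f : Fin (2*M+1) → β) :
    (∑ i : Fin (2*M+1-P), ∑ j : Fin (P+1),
      f ⟨P + i.val - j.val, by have := i.isLt; have := j.isLt; omega⟩)
    = ∑ m : Fin (2*M+1), (min (m.val+1) (min (P+1) (2*M+1-m.val))) • f m := by
  rw [← Finset.sum_product']
  have step : ∀ p : Fin (2*M+1-P) × Fin (P+1),
      f ⟨P + p.1.val - p.2.val, by have := p.1.isLt; have := p.2.isLt; omega⟩
      = ∑ m : Fin (2*M+1), if P + p.1.val = m.val + p.2.val then f m else 0 := by
    intro p
    have h : P + p.1.val - p.2.val < 2*M+1 := by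
      have := p.1.isLt; have := p.2.isLt; omega
    symm
    rw [Finset.sum_eq_single (⟨P + p.1.val - p.2.val, h⟩ : Fin (2*M+1))]
    · rw [if_pos]
      have := p.2.isLt
      simp only []
      omega
    · intro m _ hne
      rw [if_neg]
      intro hc
      refine hne (Fin.ext ?_)
      show m.val = P + p.1.val - p.2.val
      omega
    · intro hmem; exact absurd (Finset.mem_univ _) hmem
  calc (∑ p : Fin (2*M+1-P) × Fin (P+1),
          f ⟨P + p.1.val - p.2.val, by have := p.1.isLt; have := p.2.isLt; omega⟩)
      = ∑ p : Fin (2*M+1-P) × Fin (P+1), ∑ m : Fin (2*M+1),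
          if P + p.1.val = m.val + p.2.val then f m else 0 :=
        Finset.sum_congr rfl (fun p _ => step p)
    _ = ∑ m : Fin (2*M+1), ∑ p : Fin (2*M+1-P) × Fin (P+1),
          if P + p.1.val = m.val + p.2.val then f m else 0 := Finset.sum_comm
    _ = ∑ m : Fin (2*M+1), (min (m.val+1) (min (P+1) (2*M+1-m.val))) • f m := by
        refine Finset.sum_congr rfl (fun m _ => ?_)
        rw [← Finset.sum_filter, Finset.sum_const, count_lemma M P hP m.val m.isLt]

private lemma toep_sub (M P : ℕ) (x u : Fin (2*M+1) → ℂ) :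
    Toep M P x - Toep M P u = Toep M P (x - u) := by
  ext i j
  simp [Toep, Matrix.sub_apply]

private lemma toepdag_toep (M P : ℕ) (hP : P ≤ M) (u : Fin (2*M+1) → ℂ) :
    ToepDag M P (Toep M P u) = u := by
  funext m
  have h0 : (min (m.val+1) (min (P+1) (2*M+1-m.val)) : ℕ) ≠ 0 := by
    have := m.isLt; omega
  have hΓ : ((min (m.val+1) (min (P+1) (2*M+1-m.val)) : ℕ) : ℂ) ≠ 0 :=
    Nat.cast_ne_zero.mpr h0
  have hstar : ToepStar M P (Toep M P u) m
      = (min (m.val+1) (min (P+1) (2*M+1-m.val)) : ℕ) • u m := by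
    unfold ToepStar
    have hc : ∀ i : Fin (2*M+1-P), ∀ j : Fin (P+1),
        (if P + i.val = m.val + j.val then Toep M P u i j else 0)
        = (if P + i.val = m.val + j.val then u m else 0) := by
      intro i j
      by_cases h : P + i.val = m.val + j.val
      · rw [if_pos h, if_pos h]
        unfold Toep
        congr 1
        refine Fin.ext ?_
        show P + i.val - j.val = m.val
        omega
      · rw [if_neg h, if_neg h]
    rw [Finset.sum_congr rfl fun i _ => Finset.sum_congr rfl fun j _ => hc i j]
    rw [← Finset.sum_product', Finset.univ_product_univ, ← Finset.sum_filter,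
      Finset.sum_const, count_lemma M P hP m.val m.isLt]
  unfold ToepDag
  rw [hstar, nsmul_eq_mul, ← mul_assoc, inv_mul_cancel₀ hΓ, one_mul]

private lemma wsum_toep (M P : ℕ) (hP : P ≤ M) (v : Fin (2*M+1) → ℂ) :
    ∑ i, ∑ j, (wgt M P i j * ‖Toep M P v i j‖) ^ 2 = ∑ m, ‖v m‖ ^ 2 := by
  have step : (∑ i, ∑ j, (wgt M P i j * ‖Toep M P v i j‖) ^ 2)
      = ∑ i : Fin (2*M+1-P), ∑ j : Fin (P+1),
        (fun m : Fin (2*M+1) =>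
          ((min (m.val+1) (min (P+1) (2*M+1-m.val)) : ℕ) : ℝ)⁻¹ * ‖v m‖^2)
        ⟨P + i.val - j.val, by have := i.isLt; have := j.isLt; omega⟩ := by
    refine Finset.sum_congr rfl fun i _ => Finset.sum_congr rfl fun j _ => ?_
    show (wgt M P i j * ‖Toep M P v i j‖) ^ 2
      = ((min (P + i.val - j.val + 1)
          (min (P+1) (2*M+1 - (P + i.val - j.val))) : ℕ) : ℝ)⁻¹
        * ‖v ⟨P + i.val - j.val, by have := i.isLt; have := j.isLt; omega⟩‖^2
    unfold wgt Toep
    rw [mul_pow, inv_pow, Real.sq_sqrt (by positivity)]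
  rw [step]
  refine (sum_diag M P hP (fun m : Fin (2*M+1) =>
      ((min (m.val+1) (min (P+1) (2*M+1-m.val)) : ℕ) : ℝ)⁻¹ * ‖v m‖^2)).trans ?_
  refine Finset.sum_congr rfl fun m _ => ?_
  have h0 : (min (m.val+1) (min (P+1) (2*M+1-m.val)) : ℕ) ≠ 0 := by
    have := m.isLt; omega
  have hΓ : ((min (m.val+1) (min (P+1) (2*M+1-m.val)) : ℕ) : ℝ) ≠ 0 :=
    Nat.cast_ne_zero.mpr h0
  rw [nsmul_eq_mul, ← mul_assoc, mul_inv_cancel₀ hΓ, one_mul]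

/-- Proposition 1: for `H(z) = ι_{H_K}(T_P(z)) + ι_{B_ρ}(z)` with
`ρ ∈ (0, ∞]` and `τ > 0`, a point `z` belongs to the proximal set
`prox_{τH}(x) = argmin_z (1/(2τ))‖x - z‖₂² + H(z)` if and only if
`z = T_P^†(Z)` for some `Z` in the set-valued projection, w.r.t. the `W`-weighted
Frobenius norm, of `T_P(x)` onto `𝕋_P ∩ H_K ∩ B^W_ρ` (Toeplitz, rank ≤ K, weighted ball);
i.e. `prox_{τH}(x) = T_P^† Π^W_{𝕋_P ∩ H_K ∩ B^W_ρ} T_P(x)`. -/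
theorem prox_eq_weighted_projection (M P K : ℕ) (hKP : K ≤ P) (hP : P ≤ M)
    (ρ : ℝ≥0∞) (hρ : 0 < ρ) (τ : ℝ) (hτ : 0 < τ)
    (x z : Fin (2*M+1) → ℂ) :
    (((Toep M P z).rank ≤ K ∧
        ENNReal.ofReal (Real.sqrt (∑ m, ‖z m‖ ^ 2)) ≤ ρ) ∧
      ∀ z' : Fin (2*M+1) → ℂ,
        ((Toep M P z').rank ≤ K ∧
            ENNReal.ofReal (Real.sqrt (∑ m, ‖z' m‖ ^ 2)) ≤ ρ) →
          (1/(2*τ)) * (∑ m, ‖x m - z m‖ ^ 2)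
            ≤ (1/(2*τ)) * (∑ m, ‖x m - z' m‖ ^ 2))
    ↔ ∃ Z : Matrix (Fin (2*M+1-P)) (Fin (P+1)) ℂ,
        ((∃ u, Z = Toep M P u) ∧ Z.rank ≤ K ∧
            ENNReal.ofReal
              (Real.sqrt (∑ i, ∑ j, (wgt M P i j * ‖Z i j‖) ^ 2)) ≤ ρ) ∧
        (∀ Z' : Matrix (Fin (2*M+1-P)) (Fin (P+1)) ℂ,
          ((∃ u, Z' = Toep M P u) ∧ Z'.rank ≤ K ∧
              ENNReal.ofReal
                (Real.sqrt (∑ i, ∑ j, (wgt M P i j * ‖Z' i j‖) ^ 2)) ≤ ρ) →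
            Real.sqrt (∑ i, ∑ j, (wgt M P i j * ‖(Toep M P x - Z) i j‖) ^ 2)
              ≤ Real.sqrt (∑ i, ∑ j, (wgt M P i j * ‖(Toep M P x - Z') i j‖) ^ 2)) ∧
        z = ToepDag M P Z := by

  have hpos : (0:ℝ) < 1/(2*τ) := by positivity
  constructor
  · rintro ⟨⟨hrank, hball⟩, hmin⟩
    refine ⟨Toep M P z, ⟨⟨z, rfl⟩, hrank, ?_⟩, ?_, (toepdag_toep M P hP z).symm⟩
    · rwa [wsum_toep M P hP z]
    · rintro Z' ⟨⟨u, rfl⟩, hrank', hball'⟩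
      rw [toep_sub, toep_sub, wsum_toep M P hP, wsum_toep M P hP]
      have hm := hmin u ⟨hrank', by rwa [wsum_toep M P hP u] at hball'⟩
      have h2 : ∑ m, ‖x m - z m‖^2 ≤ ∑ m, ‖x m - u m‖^2 :=
        le_of_mul_le_mul_left hm hpos
      refine Real.sqrt_le_sqrt ?_
      simpa [Pi.sub_apply] using h2
  · rintro ⟨Z, ⟨⟨u, rfl⟩, hrank, hball⟩, hmin, hz⟩
    rw [toepdag_toep M P hP u] at hz
    subst hz
    refine ⟨⟨hrank, by rwa [wsum_toep M P hP z] at hball⟩, ?_⟩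
    rintro z' ⟨hrank', hball'⟩
    have hm := hmin (Toep M P z') ⟨⟨z', rfl⟩, hrank', by rwa [wsum_toep M P hP z']⟩
    rw [toep_sub, toep_sub, wsum_toep M P hP, wsum_toep M P hP] at hm
    have ha : (0:ℝ) ≤ ∑ m, ‖(x - z) m‖^2 :=
      Finset.sum_nonneg fun m _ => by positivity
    have hb : (0:ℝ) ≤ ∑ m, ‖(x - z') m‖^2 :=
      Finset.sum_nonneg fun m _ => by positivity
    have h2 : ∑ m, ‖(x - z) m‖^2 ≤ ∑ m, ‖(x - z') m‖^2 := by
      have hp := pow_le_pow_left₀ (Real.sqrt_nonneg _) hm 2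
      rwa [Real.sq_sqrt ha, Real.sq_sqrt hb] at hp
    have := mul_le_mul_of_nonneg_left h2 hpos.le
    simpa [Pi.sub_apply] using this
end

section
/- (Proposition 2) For the Toeplitz weight matrix W = T_P(diag(Γ^{-1/2})), the projection onto the subspace of Toeplitz matrices with respect to the W-weighted Frobenius norm ||W ⊙ (·)||_F coincides with the projection with respect to the canonical Frobenius norm: Π^W_{T_P}(X) = Π_{T_P}(X) = T_P Γ^{-1} T_P*(X) for every X ∈ C^{(N-P)×(P+1)}. -/
open scoped BigOperators

/-!
Toeplitz matrices and the weight `W` are constant along each diagonal `P + i - j = m`, so the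
weighted squared distance from `X` to `T_P(u)` is `∑ₘ wₘ² ∑_{(i,j) on diagonal m} |X i j - uₘ|²`.
Each summand is minimised by the average of `X` over the diagonal, which is `(T_P^† X)ₘ`,
whatever the weights are.
-/

open Finset

theorem Finset.sum_norm_sub_sq_le_of_sum_sub_eq_zero {α E : Type*} [NormedAddCommGroup E]
    [InnerProductSpace ℝ E] (s : Finset α) (f : α → E) {c : E}
    (hc : ∑ x ∈ s, (f x - c) = 0) (u : E) :
    ∑ x ∈ s, ‖f x - c‖ ^ 2 ≤ ∑ x ∈ s, ‖f x - u‖ ^ 2 := by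
  have hsplit : ∀ x, ‖f x - u‖ ^ 2 = ‖f x - c‖ ^ 2 + 2 * inner ℝ (f x - c) (c - u)
      + ‖c - u‖ ^ 2 := fun x => by
    rw [← norm_add_sq_real, sub_add_sub_cancel]
  have hcross : ∑ x ∈ s, inner ℝ (f x - c) (c - u) = 0 := by
    rw [← sum_inner, hc, inner_zero_left]
  simp only [hsplit, sum_add_distrib, ← mul_sum, hcross, mul_zero, add_zero]
  exact le_add_of_nonneg_right (sum_nonneg fun _ _ => sq_nonneg _)

namespace Toep

variable {M P : ℕ}

def diagIdx (M P : ℕ) (i : Fin (2*M+1-P)) (j : Fin (P+1)) : Fin (2*M+1) :=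
  ⟨P + i.val - j.val, by have := i.isLt; have := j.isLt; omega⟩

def diag (M P : ℕ) (m : Fin (2*M+1)) : Finset (Fin (2*M+1-P) × Fin (P+1)) :=
  univ.filter fun p => diagIdx M P p.1 p.2 = m

def diagLen (M P : ℕ) (m : Fin (2*M+1)) : ℕ :=
  min (m.val + 1) (min (P+1) (2*M+1 - m.val))

theorem mem_diag {m : Fin (2*M+1)} {p : Fin (2*M+1-P) × Fin (P+1)} :
    p ∈ diag M P m ↔ P + p.1.val = m.val + p.2.val := by
  have := p.1.isLt; have := p.2.isLt
  simp only [diag, mem_filter, mem_univ, true_and, diagIdx, Fin.ext_iff]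
  omega

/-- The entry `(m + j - P, j)` of the diagonal `m` is determined by its column `j`, which
ranges over `[P - m, min (P + 1) (2M + 1 - m))`. -/
theorem card_diag (hP : P ≤ M) (m : Fin (2*M+1)) : #(diag M P m) = diagLen M P m := by
  have hm := m.isLt
  have hcols : #(diag M P m) = #(Ico (P - m.val) (min (P+1) (2*M+1 - m.val))) := by
    refine card_bij (fun p _ => p.2.val) (fun p hp => ?_) (fun p hp q hq hpq => ?_)
      (fun j hj => ?_)
    · have := p.1.isLt; have := p.2.isLt
      rw [mem_diag] at hp
      rw [mem_Ico]
      omega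
    · rw [mem_diag] at hp hq
      exact Prod.ext (Fin.ext (by omega)) (Fin.ext hpq)
    · rw [mem_Ico] at hj
      exact ⟨(⟨m.val + j - P, by omega⟩, ⟨j, by omega⟩), mem_diag.2 (by simp only; omega), rfl⟩
  rw [hcols, Nat.card_Ico, diagLen]
  omega

theorem ToepStar_eq_sum_diag (H : Matrix (Fin (2*M+1-P)) (Fin (P+1)) ℂ) (m : Fin (2*M+1)) :
    ToepStar M P H m = ∑ p ∈ diag M P m, H p.1 p.2 := by
  rw [ToepStar, ← Fintype.sum_prod_type', ← sum_filter]
  exact sum_congr (by ext p; simp only [mem_filter, mem_univ, true_and, mem_diag]) fun _ _ => rfl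

theorem sum_diag_sub_ToepDag (hP : P ≤ M) (H : Matrix (Fin (2*M+1-P)) (Fin (P+1)) ℂ)
    (m : Fin (2*M+1)) : ∑ p ∈ diag M P m, (H p.1 p.2 - ToepDag M P H m) = 0 := by
  have hlen : (diagLen M P m : ℂ) ≠ 0 := by
    have := m.isLt
    exact Nat.cast_ne_zero.2 (by rw [diagLen]; omega)
  have hdag : ToepDag M P H m = (diagLen M P m : ℂ)⁻¹ * ∑ p ∈ diag M P m, H p.1 p.2 := by
    rw [ToepDag, ToepStar_eq_sum_diag]; rfl
  rw [sum_sub_distrib, sum_const, card_diag hP, nsmul_eq_mul, hdag, mul_inv_cancel_left₀ hlen,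
    sub_self]

theorem sum_weighted_sq_dist_ToepDag_le (hP : P ≤ M) (w : Fin (2*M+1) → ℝ)
    (X : Matrix (Fin (2*M+1-P)) (Fin (P+1)) ℂ) (u : Fin (2*M+1) → ℂ) :
    ∑ i, ∑ j, (w (diagIdx M P i j) * ‖(X - Toep M P (ToepDag M P X)) i j‖) ^ 2
      ≤ ∑ i, ∑ j, (w (diagIdx M P i j) * ‖(X - Toep M P u) i j‖) ^ 2 := by
  have hsplit : ∀ v : Fin (2*M+1) → ℂ,
      ∑ i, ∑ j, (w (diagIdx M P i j) * ‖(X - Toep M P v) i j‖) ^ 2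
        = ∑ m, w m ^ 2 * ∑ p ∈ diag M P m, ‖X p.1 p.2 - v m‖ ^ 2 := fun v => by
    rw [← Fintype.sum_prod_type', ← sum_fiberwise univ (fun p => diagIdx M P p.1 p.2)]
    refine sum_congr rfl fun m _ => ?_
    rw [mul_sum]
    refine sum_congr rfl fun p hp => ?_
    rw [(mem_filter.1 hp).2.symm, mul_pow]
    rfl
  rw [hsplit, hsplit]
  exact sum_le_sum fun m _ => mul_le_mul_of_nonneg_left
    (sum_norm_sub_sq_le_of_sum_sub_eq_zero _ _ (sum_diag_sub_ToepDag hP X m) _) (sq_nonneg _)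

end Toep

open Toep in
/-- Proposition 2: the projection onto the Toeplitz subspace `𝕋_P` with
respect to the `W`-weighted Frobenius norm (`W = T_P(diag(Γ^{-1/2}))`) coincides with the
canonical (Frobenius) orthogonal projection `Π_{𝕋_P} = T_P Γ^{-1} T_P^*`: for every `X`,
the matrix `T_P Γ^{-1} T_P^* X` is Toeplitz and minimises both the `W`-weighted and the
canonical Frobenius distance from `X` over all Toeplitz matrices. -/
theorem weighted_toeplitz_projection (M P : ℕ) (hP : P ≤ M)
    (X : Matrix (Fin (2*M+1-P)) (Fin (P+1)) ℂ) :
    (∃ u : Fin (2*M+1) → ℂ, Toep M P (ToepDag M P X) = Toep M P u) ∧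
    (∀ Z : Matrix (Fin (2*M+1-P)) (Fin (P+1)) ℂ, (∃ u, Z = Toep M P u) →
      Real.sqrt (∑ i, ∑ j, (wgt M P i j * ‖(X - Toep M P (ToepDag M P X)) i j‖) ^ 2)
        ≤ Real.sqrt (∑ i, ∑ j, (wgt M P i j * ‖(X - Z) i j‖) ^ 2)) ∧
    (∀ Z : Matrix (Fin (2*M+1-P)) (Fin (P+1)) ℂ, (∃ u, Z = Toep M P u) →
      Real.sqrt (∑ i, ∑ j, ‖(X - Toep M P (ToepDag M P X)) i j‖ ^ 2)
        ≤ Real.sqrt (∑ i, ∑ j, ‖(X - Z) i j‖ ^ 2)) := by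
  refine ⟨⟨ToepDag M P X, rfl⟩, ?_, ?_⟩
  · rintro _ ⟨u, rfl⟩
    exact Real.sqrt_le_sqrt <| sum_weighted_sq_dist_ToepDag_le hP
      (fun m => (Real.sqrt (diagLen M P m))⁻¹) X u
  · rintro _ ⟨u, rfl⟩
    simpa only [one_mul] using Real.sqrt_le_sqrt <|
      sum_weighted_sq_dist_ToepDag_le hP (fun _ => 1) X u
end
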